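/- Let a be a positive integer, x real, and \lambda_m = \sum_{l=0}^{m} S(l+a,a) x^{m-l} C(m,l) C(l+a,a)^{-1} for m >= 1. Then for n >= k >= 0, the partial Bell polynomial satisfies B_{n,k}(\lambda_1, ..., \lambda_{n-k+1}) = (1/k!) \sum_{r=0}^{k} (-1)^{k-r} C(k,r) \sum_{l=0}^{n} S(l+ar, ar) (rx)^{n-l} C(n,l) C(l+ar, ar)^{-1}. -/

import Mathlib

open Finset PowerSeries

/-- Stirling numbers of the second kind. -/
def stirling2 : ℕ → ℕ → ℕ
  | 0, 0 => 1
  | 0, _ + 1 => 0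
  | _ + 1, 0 => 0
  | n + 1, k + 1 => (k + 1) * stirling2 n (k + 1) + stirling2 n k

/-- Partial Bell polynomial `B_{n,k}(x 1, x 2, ...)`, summing over sequences
`ℓ` of nonnegative integers with `∑ i * ℓ i = n` and `∑ ℓ i = k`. -/
noncomputable def bellPoly (n k : ℕ) (x : ℕ → ℝ) : ℝ :=
  ∑ ℓ ∈ (Fintype.piFinset fun _ : Fin n => Finset.range (n + 1)).filter
      (fun ℓ => (∑ i, (i.1 + 1) * ℓ i) = n ∧ (∑ i, ℓ i) = k),
    ((n.factorial : ℝ) / ∏ i, ((ℓ i).factorial : ℝ)) *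
      ∏ i, (x (i.1 + 1) / ((i.1 + 1).factorial : ℝ)) ^ (ℓ i)

/-- The power series `(e^t - 1)/t`, with constant term `1`. -/
noncomputable def expm1DivT : PowerSeries ℝ :=
  PowerSeries.mk fun n => 1 / ((n + 1).factorial : ℝ)

/-- The power series `e^{x t}`. -/
noncomputable def expSeries (x : ℝ) : PowerSeries ℝ :=
  PowerSeries.mk fun n => x ^ n / (n.factorial : ℝ)

/-- The generalized Bernoulli polynomial value `B_n^a(-x)`, defined via the
exponential generating function `(t/(e^t-1))^a e^{-x t}`. -/
noncomputable def genBernoulliNeg (a : ℕ) (x : ℝ) (n : ℕ) : ℝ :=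
  (n.factorial : ℝ) * PowerSeries.coeff n ((expm1DivT ^ a)⁻¹ * expSeries (-x))

/-!
The sequence `λ` has exponential generating function `F = ((e^t - 1)/t)^a e^{xt}`: differentiating
`(e^t - 1)^a` reproduces the Stirling recurrence, so `(e^t - 1)^a = a! ∑ S(n,a) t^n/n!`. Since
`F` has constant term `1`, the partial Bell polynomial is `n!/k! [t^n] (F - 1)^k`; expanding
`(F - 1)^k` binomially leaves the coefficients of `F^r = ((e^t - 1)/t)^{ar} e^{rxt}`, which are
given by the same formula as `λ` with `a, x` replaced by `ar, rx`.
-/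

open scoped Nat

lemma stirling2_zero_left (k : ℕ) : stirling2 0 k = if k = 0 then 1 else 0 := by
  cases k <;> rfl

section ExpSubOne

variable {A : Type*} [CommRing A] [Algebra ℚ A]

lemma derivative_exp_sub_one_pow_succ (a : ℕ) :
    d⁄dX A ((exp A - 1) ^ (a + 1)) = (a + 1) • ((exp A - 1) ^ (a + 1) + (exp A - 1) ^ a) := by
  rw [derivative_pow, map_sub, derivative_exp, derivative_one, sub_zero, nsmul_eq_mul,
    add_tsub_cancel_right]
  push_cast
  ring

lemma factorial_mul_coeff_exp_sub_one_pow (n a : ℕ) :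
    (n ! : A) * coeff n ((exp A - 1) ^ a) = a ! * stirling2 n a := by
  induction n generalizing a with
  | zero => cases a <;> simp [stirling2_zero_left]
  | succ n ih =>
    rcases a with _ | a
    · simp [coeff_one, stirling2]
    have h := congrArg (coeff n) (derivative_exp_sub_one_pow_succ (A := A) a)
    rw [coeff_derivative, map_nsmul, map_add] at h
    calc ((n + 1)! : A) * coeff (n + 1) ((exp A - 1) ^ (a + 1))
        = n ! * (coeff (n + 1) ((exp A - 1) ^ (a + 1)) * (n + 1)) := by
          push_cast [Nat.factorial_succ]; ring
      _ = (a + 1) * ((n ! : A) * coeff n ((exp A - 1) ^ (a + 1)) +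
            n ! * coeff n ((exp A - 1) ^ a)) := by
          rw [h, nsmul_eq_mul]; push_cast; ring
      _ = _ := by
          rw [ih, ih, stirling2]; push_cast [Nat.factorial_succ]; ring

end ExpSubOne

lemma exp_sub_one_eq_X_mul_expm1DivT : exp ℝ - 1 = X * expm1DivT := by
  ext (_ | n)
  · simp [expm1DivT]
  · simp [coeff_succ_X_mul, expm1DivT]

lemma coeff_expm1DivT_pow (n a : ℕ) :
    coeff n (expm1DivT ^ a) = a ! * stirling2 (n + a) a / (n + a)! := by
  have h := factorial_mul_coeff_exp_sub_one_pow (A := ℝ) (n + a) a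
  rw [exp_sub_one_eq_X_mul_expm1DivT, mul_pow, coeff_X_pow_mul', if_pos (Nat.le_add_left a n),
    Nat.add_sub_cancel] at h
  rw [← h]
  field_simp

lemma expSeries_eq_rescale_exp (x : ℝ) : expSeries x = rescale x (exp ℝ) := by
  ext n
  simp [expSeries, coeff_exp, div_eq_mul_inv]

lemma expSeries_pow (x : ℝ) (r : ℕ) : expSeries x ^ r = expSeries (r * x) := by
  rw [expSeries_eq_rescale_exp, ← map_pow, exp_pow_eq_rescale_exp, rescale_rescale,
    expSeries_eq_rescale_exp]

lemma constantCoeff_expm1DivT : constantCoeff expm1DivT = 1 := by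
  simp [expm1DivT, ← coeff_zero_eq_constantCoeff_apply]

lemma constantCoeff_expSeries (x : ℝ) : constantCoeff (expSeries x) = 1 := by
  simp [expSeries, ← coeff_zero_eq_constantCoeff_apply]

lemma sum_stirling2_mul_choose_eq_coeff (a m : ℕ) (x : ℝ) :
    ∑ l ∈ range (m + 1), (stirling2 (l + a) a : ℝ) * x ^ (m - l) * (m.choose l : ℝ) *
        ((l + a).choose a : ℝ)⁻¹ = m ! * coeff m (expm1DivT ^ a * expSeries x) := by
  rw [coeff_mul, Nat.sum_antidiagonal_eq_sum_range_succ_mk, mul_sum]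
  refine sum_congr rfl fun l hl => ?_
  have hlm : l ≤ m := Nat.lt_succ_iff.mp (mem_range.mp hl)
  rw [coeff_expm1DivT_pow, expSeries, coeff_mk, Nat.cast_choose ℝ hlm,
    Nat.cast_choose ℝ (Nat.le_add_left a l), Nat.add_sub_cancel]
  field_simp

lemma coeff_pow_eq_of_coeff_eq {R : Type*} [CommRing R] {f g : R⟦X⟧} {n : ℕ}
    (h : ∀ m ≤ n, coeff m f = coeff m g) (k : ℕ) : coeff n (f ^ k) = coeff n (g ^ k) := by
  have hfg : X ^ (n + 1) ∣ f - g := by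
    rw [X_pow_dvd_iff]
    intro m hm
    rw [map_sub, h m (Nat.lt_succ_iff.mp hm), sub_self]
  have := (X_pow_dvd_iff.mp (hfg.trans (sub_dvd_pow_sub_pow f g k))) n n.lt_succ_self
  rwa [map_sub, sub_eq_zero] at this

lemma coeff_sum_C_mul_X_pow_pow {R ι : Type*} [CommSemiring R] [DecidableEq ι] (s : Finset ι)
    (c : ι → R) (w : ι → ℕ) (k n : ℕ) :
    coeff n ((∑ i ∈ s, C (c i) * X ^ w i) ^ k) =
      ∑ ℓ ∈ (s.piAntidiag k).filter (fun ℓ => ∑ i ∈ s, w i * ℓ i = n),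
        (Nat.multinomial s ℓ : R) * ∏ i ∈ s, c i ^ ℓ i := by
  have hmonomial (ℓ : ι → ℕ) : ∏ i ∈ s, (C (c i) * X ^ w i) ^ ℓ i =
      C (∏ i ∈ s, c i ^ ℓ i) * X ^ (∑ i ∈ s, w i * ℓ i) := by
    rw [map_prod, ← prod_pow_eq_pow_sum, ← prod_mul_distrib]
    refine prod_congr rfl fun i _ => ?_
    rw [mul_pow, map_pow, ← pow_mul]
  simp_rw [sum_pow_eq_sum_piAntidiag, map_sum, hmonomial, ← map_natCast (C (R := R)),
    ← mul_assoc, ← map_mul, coeff_C_mul_X_pow, sum_filter, eq_comm]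

lemma bellPoly_index_eq (n k : ℕ) :
    (Fintype.piFinset fun _ : Fin n => range (n + 1)).filter
        (fun ℓ => (∑ i, (i.1 + 1) * ℓ i) = n ∧ (∑ i, ℓ i) = k) =
      ((univ : Finset (Fin n)).piAntidiag k).filter (fun ℓ => ∑ i, (i.1 + 1) * ℓ i = n) := by
  ext ℓ
  simp only [mem_filter, Fintype.mem_piFinset, mem_range, mem_piAntidiag, mem_univ,
    implies_true, and_true]
  refine ⟨fun ⟨_, hw, hk⟩ => ⟨hk, hw⟩, fun ⟨hk, hw⟩ => ⟨fun i => ?_, hw, hk⟩⟩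
  have : (i.1 + 1) * ℓ i ≤ n :=
    hw.le.trans' <| single_le_sum (f := fun j : Fin n => (j.1 + 1) * ℓ j)
      (fun j _ => Nat.zero_le _) (mem_univ i)
  nlinarith

lemma bellPoly_eq_coeff_sum_C_mul_X_pow_pow (n k : ℕ) (x : ℕ → ℝ) :
    bellPoly n k x = n ! / k ! *
      coeff n ((∑ i : Fin n, C (x (i + 1) / (i + 1)!) * X ^ (i.1 + 1)) ^ k) := by
  rw [coeff_sum_C_mul_X_pow_pow, bellPoly, bellPoly_index_eq, mul_sum]
  refine sum_congr rfl fun ℓ hℓ => ?_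
  have hk : ∑ i, ℓ i = k := (mem_piAntidiag.mp (mem_filter.mp hℓ).1).1
  rw [← hk, ← Nat.multinomial_spec univ ℓ]
  have : (∏ i, ((ℓ i)! : ℝ)) ≠ 0 := prod_ne_zero_iff.mpr fun i _ => by positivity
  have : (Nat.multinomial univ ℓ : ℝ) ≠ 0 := Nat.cast_ne_zero.mpr (Nat.multinomial_pos _ _).ne'
  push_cast
  field_simp

lemma bellPoly_eq_coeff_pow {n k : ℕ} {x : ℕ → ℝ} {g : ℝ⟦X⟧} (hg : constantCoeff g = 0)
    (hx : ∀ m, 0 < m → x m = m ! * coeff m g) :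
    bellPoly n k x = n ! / k ! * coeff n (g ^ k) := by
  rw [bellPoly_eq_coeff_sum_C_mul_X_pow_pow]
  congr 1
  refine coeff_pow_eq_of_coeff_eq (fun m hm => ?_) k
  simp only [hx _ (Nat.succ_pos _), map_sum, coeff_C_mul_X_pow]
  rcases m with _ | m
  · simp [hg]
  · rw [sum_eq_single ⟨m, hm⟩
      (fun i _ hi => if_neg fun h => hi (Fin.ext (Nat.succ.inj h).symm)) (by simp)]
    field_simp
    simp

lemma coeff_sub_one_pow {R : Type*} [CommRing R] (F : R⟦X⟧) (k n : ℕ) :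
    coeff n ((F - 1) ^ k) =
      ∑ r ∈ range (k + 1), (-1) ^ (k - r) * k.choose r * coeff n (F ^ r) := by
  rw [sub_eq_add_neg, add_pow, map_sum]
  refine sum_congr rfl fun r _ => ?_
  have hC : (-1 : R⟦X⟧) ^ (k - r) * (k.choose r : R⟦X⟧) =
      C ((-1 : R) ^ (k - r) * k.choose r) := by
    simp
  rw [mul_assoc, hC, mul_comm, coeff_C_mul]

theorem bellPoly_eval_general (n k a : ℕ) (x : ℝ) :
    bellPoly n k (fun m => ∑ l ∈ Finset.range (m + 1),
        (stirling2 (l + a) a : ℝ) * x ^ (m - l) * (m.choose l : ℝ) *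
          ((l + a).choose a : ℝ)⁻¹) =
      (1 / (k.factorial : ℝ)) *
        ∑ r ∈ Finset.range (k + 1),
          (-1 : ℝ) ^ (k - r) * (k.choose r : ℝ) *
            ∑ l ∈ Finset.range (n + 1),
              (stirling2 (l + a * r) (a * r) : ℝ) * ((r : ℝ) * x) ^ (n - l) *
                (n.choose l : ℝ) * ((l + a * r).choose (a * r) : ℝ)⁻¹ := by
  set F := expm1DivT ^ a * expSeries x
  have hF : constantCoeff F = 1 := by
    simp [F, constantCoeff_expm1DivT, constantCoeff_expSeries]
  have hFr (r : ℕ) : expm1DivT ^ (a * r) * expSeries (r * x) = F ^ r := by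
    rw [mul_pow, ← pow_mul, expSeries_pow]
  rw [bellPoly_eq_coeff_pow (g := F - 1) (by simp [hF])]
  · simp only [sum_stirling2_mul_choose_eq_coeff, hFr, coeff_sub_one_pow, mul_sum]
    exact sum_congr rfl fun r _ => by ring
  · intro m hm
    rw [sum_stirling2_mul_choose_eq_coeff, map_sub, coeff_one, if_neg hm.ne', sub_zero]

/-- Evaluation of the partial Bell polynomial at `λ_m = ∑_{l=0}^m S(l+a,a) x^{m-l} C(m,l) C(l+a,a)⁻¹`. -/
theorem bellPoly_eval (n k a : ℕ) (ha : 0 < a) (hkn : k ≤ n) (x : ℝ) :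
    bellPoly n k (fun m => ∑ l ∈ Finset.range (m + 1),
        (stirling2 (l + a) a : ℝ) * x ^ (m - l) * (m.choose l : ℝ) *
          ((l + a).choose a : ℝ)⁻¹) =
      (1 / (k.factorial : ℝ)) *
        ∑ r ∈ Finset.range (k + 1),
          (-1 : ℝ) ^ (k - r) * (k.choose r : ℝ) *
            ∑ l ∈ Finset.range (n + 1),
              (stirling2 (l + a * r) (a * r) : ℝ) * ((r : ℝ) * x) ^ (n - l) *
                (n.choose l : ℝ) * ((l + a * r).choose (a * r) : ℝ)⁻¹ :=
  bellPoly_eval_general n k a x
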